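/- Let A ∈ ℝ^{n×n}, B ∈ ℝ^{m×m}, C1 ∈ ℝ^{n×s}, C2 ∈ ℝ^{m×s}, F := I_m ⊗ A + Bᵀ ⊗ I_n, and c := vec(C1 C2ᵀ). Let Z ∈ ℝ^{n×m} be such that vec(Z) ∈ K_k(F,c) := span(c, Fc, …, F^{k-1}c), say vec(Z) = Σ_{i=0}^{k-1} ρ_i F^i c with ρ_i ∈ ℝ. Then Z = [C1, AC1, …, A^{k-1}C1] · Ẑ · [C2, BᵀC2, …, (Bᵀ)^{k-1}C2]ᵀ, where Ẑ ∈ ℝ^{ks×ks} is the block matrix with k×k blocks of size s×s whose (i,j)-th block (1 ≤ i,j ≤ k) equals binom(i+j-2, i-1)·ρ_{i+j-2}·I_s if i+j ≤ k+1 and equals the s×s zero matrix if i+j > k+1. -/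

import Mathlib

/-!
Under `vec`, the matrices `1 ⊗ₖ A` and `Bᵀ ⊗ₖ 1` act as `X ↦ A * X` and `X ↦ X * B`. These
commute, so the binomial theorem gives `Fⁱ c = vec (∑_{a+b=i} binom(i, a) • Aᵃ C₁ C₂ᵀ Bᵇ)`.
Regrouping `∑_{i<k} ρᵢ Fⁱ c` by the pairs `(a, b)` with `a + b < k` yields
`∑_{a,b} Ẑ_{ab} (Aᵃ C₁) (Bᵀᵇ C₂)ᵀ`, which is the block product
`[C₁, …, Aᵏ⁻¹ C₁] Ẑ [C₂, …, Bᵀᵏ⁻¹ C₂]ᵀ` since `Ẑ = (Ẑ_{ab}) ⊗ₖ I_s`.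
-/

open Matrix Kronecker

noncomputable section

/-- `vec X` stacks the columns of `X` on top of each other; the entry of `vec X`
indexed by `(j, i)` (column `j`, row `i`) is `X i j`. -/
def vec {n m : ℕ} (X : Matrix (Fin n) (Fin m) ℝ) : Fin m × Fin n → ℝ :=
  fun p => X p.2 p.1

/-- The block Krylov matrix `[C, AC, A²C, …, A^{k-1}C]`. -/
def krylovMat {n s : ℕ} (A : Matrix (Fin n) (Fin n) ℝ) (C : Matrix (Fin n) (Fin s) ℝ) (k : ℕ) :
    Matrix (Fin n) (Fin k × Fin s) ℝ :=
  Matrix.of fun i p => (A ^ (p.1 : ℕ) * C) i p.2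

/-- The `ks × ks` block upper anti-triangular matrix `Ẑ` whose `(i,j)`-th `s × s` block
(with `1 ≤ i, j ≤ k`, here indexed from `0`) is `binom(i+j-2, i-1)·ρ_{i+j-2}·I_s` if
`i + j ≤ k + 1` and the zero block otherwise. -/
def Zhat (k s : ℕ) (ρ : ℕ → ℝ) : Matrix (Fin k × Fin s) (Fin k × Fin s) ℝ :=
  Matrix.of fun p q =>
    if (p.1 : ℕ) + 1 + ((q.1 : ℕ) + 1) ≤ k + 1 then
      (((p.1 : ℕ) + (q.1 : ℕ)).choose (p.1 : ℕ) : ℝ) * ρ ((p.1 : ℕ) + (q.1 : ℕ)) *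
        (if p.2 = q.2 then 1 else 0)
    else 0

open Finset

theorem vec_eq_matrix_vec {n m : ℕ} (X : Matrix (Fin n) (Fin m) ℝ) :
    _root_.vec X = Matrix.vec X :=
  rfl

section Kronecker

variable {R : Type*} [CommSemiring R] {m n : Type*} [Fintype m] [Fintype n]
  [DecidableEq m] [DecidableEq n]

theorem one_kronecker_pow (A : Matrix n n R) (i : ℕ) :
    ((1 : Matrix m m R) ⊗ₖ A) ^ i = (1 : Matrix m m R) ⊗ₖ (A ^ i) := by
  induction i with
  | zero => simp
  | succ i ih => rw [pow_succ, ih, ← mul_kronecker_mul, one_mul, ← pow_succ]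

theorem kronecker_one_pow (B : Matrix m m R) (i : ℕ) :
    (B ⊗ₖ (1 : Matrix n n R)) ^ i = (B ^ i) ⊗ₖ (1 : Matrix n n R) := by
  induction i with
  | zero => simp
  | succ i ih => rw [pow_succ, ih, ← mul_kronecker_mul, one_mul, ← pow_succ]

theorem sylvester_pow_mulVec_vec (A : Matrix n n R) (B : Matrix m m R) (X : Matrix n m R)
    (i : ℕ) :
    ((1 : Matrix m m R) ⊗ₖ A + Bᵀ ⊗ₖ (1 : Matrix n n R)) ^ i *ᵥ Matrix.vec X =
      Matrix.vec (∑ p ∈ antidiagonal i, i.choose p.1 • (A ^ p.1 * X * B ^ p.2)) := by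
  have hcomm : Commute ((1 : Matrix m m R) ⊗ₖ A) (Bᵀ ⊗ₖ (1 : Matrix n n R)) := by
    simp only [Commute, SemiconjBy, ← mul_kronecker_mul, one_mul, mul_one]
  rw [hcomm.add_pow', sum_mulVec, vec_sum]
  refine sum_congr rfl fun p _ => ?_
  rw [one_kronecker_pow, kronecker_one_pow, ← mul_kronecker_mul, one_mul, mul_one, smul_mulVec,
    kronecker_mulVec_vec, vec_smul, ← transpose_pow, transpose_transpose]

end Kronecker

theorem sum_range_sum_antidiagonal_eq_sum_fin {M : Type*} [AddCommMonoid M] (k : ℕ)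
    (f : ℕ × ℕ → M) :
    ∑ i ∈ range k, ∑ p ∈ antidiagonal i, f p =
      ∑ a : Fin k, ∑ b : Fin k, if (a : ℕ) + b < k then f (a, b) else 0 := by
  let g : ℕ → ℕ → M := fun a b => if a + b < k then f (a, b) else 0
  rw [Fin.sum_univ_eq_sum_range (fun a => ∑ b : Fin k, g a b),
    sum_congr rfl fun a _ => Fin.sum_univ_eq_sum_range (g a) k, ← sum_product' (f := g),
    ← sum_filter, sum_sigma']
  refine sum_nbij' (·.2) (fun p => ⟨p.1 + p.2, p⟩) ?_ ?_ ?_ ?_ fun _ _ => rfl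
  · rintro ⟨i, a, b⟩
    simp only [mem_sigma, mem_range, HasAntidiagonal.mem_antidiagonal, mem_filter,
      mem_product]
    omega
  · rintro ⟨a, b⟩
    simp only [mem_sigma, mem_range, HasAntidiagonal.mem_antidiagonal, mem_filter,
      mem_product, and_true]
    exact And.right
  · rintro ⟨i, a, b⟩ h
    simp only [mem_sigma, HasAntidiagonal.mem_antidiagonal] at h
    simp [h.2]
  · intro _ _
    rfl

section BlockRow

variable {ι m n s R : Type*} [Fintype ι] [Fintype s] [DecidableEq s] [CommSemiring R]

def blockRow (P : ι → Matrix m s R) : Matrix m (ι × s) R :=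
  of fun i q => P q.1 i q.2

theorem blockRow_mul_kronecker_one_mul_transpose_blockRow (P : ι → Matrix m s R)
    (Q : ι → Matrix n s R) (D : Matrix ι ι R) :
    blockRow P * (D ⊗ₖ (1 : Matrix s s R)) * (blockRow Q)ᵀ = ∑ a, ∑ b, D a b • (P a * (Q b)ᵀ) := by
  ext i j
  simp only [blockRow, mul_apply, of_apply, kronecker_apply, one_apply, transpose_apply,
    Fintype.sum_prod_type, Matrix.sum_apply, Matrix.smul_apply, smul_eq_mul, sum_mul, mul_sum,
    mul_ite, mul_one, mul_zero, ite_mul, zero_mul, sum_ite_eq', mem_univ, if_true]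
  conv_lhs => enter [2, b]; rw [sum_comm]
  rw [sum_comm]
  exact sum_congr rfl fun a _ => sum_congr rfl fun b _ => sum_congr rfl fun t _ => by ring

end BlockRow

theorem krylovMat_eq_blockRow {n s : ℕ} (A : Matrix (Fin n) (Fin n) ℝ)
    (C : Matrix (Fin n) (Fin s) ℝ) (k : ℕ) :
    krylovMat A C k = blockRow fun a : Fin k => A ^ (a : ℕ) * C :=
  rfl

theorem Zhat_eq_kronecker (k s : ℕ) (ρ : ℕ → ℝ) :
    Zhat k s ρ = (of fun a b : Fin k =>
      if (a : ℕ) + b < k then (((a : ℕ) + b).choose a : ℝ) * ρ (a + b) else 0) ⊗ₖ 1 := by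
  ext ⟨a, i⟩ ⟨b, j⟩
  simp only [Zhat, of_apply, kronecker_apply, one_apply]
  have : (a : ℕ) + 1 + ((b : ℕ) + 1) ≤ k + 1 ↔ (a : ℕ) + b < k := by omega
  simp only [this]
  split_ifs <;> simp

theorem stmt5 (n m s : ℕ) (A : Matrix (Fin n) (Fin n) ℝ) (B : Matrix (Fin m) (Fin m) ℝ)
    (C1 : Matrix (Fin n) (Fin s) ℝ) (C2 : Matrix (Fin m) (Fin s) ℝ) (k : ℕ)
    (Z : Matrix (Fin n) (Fin m) ℝ) (ρ : ℕ → ℝ)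
    (hZ : _root_.vec Z = ∑ i ∈ Finset.range k, ρ i •
      ((((1 : Matrix (Fin m) (Fin m) ℝ) ⊗ₖ A + Bᵀ ⊗ₖ (1 : Matrix (Fin n) (Fin n) ℝ)) ^ i) *ᵥ
        _root_.vec (C1 * C2ᵀ))) :
    Z = krylovMat A C1 k * Zhat k s ρ * (krylovMat Bᵀ C2 k)ᵀ := by
  have hZ_sum : Z = ∑ i ∈ range k, ∑ p ∈ antidiagonal i,
      (((p.1 + p.2).choose p.1 : ℝ) * ρ (p.1 + p.2)) • (A ^ p.1 * (C1 * C2ᵀ) * B ^ p.2) := by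
    simp only [vec_eq_matrix_vec] at hZ
    rw [← Matrix.vec_inj, hZ, vec_sum]
    refine sum_congr rfl fun i _ => ?_
    rw [sylvester_pow_mulVec_vec, ← vec_smul, smul_sum]
    refine congrArg Matrix.vec (sum_congr rfl fun p hp => ?_)
    rw [mem_antidiagonal.1 hp, ← Nat.cast_smul_eq_nsmul ℝ, smul_smul, mul_comm]
  rw [hZ_sum, sum_range_sum_antidiagonal_eq_sum_fin, Zhat_eq_kronecker, krylovMat_eq_blockRow,
    krylovMat_eq_blockRow, blockRow_mul_kronecker_one_mul_transpose_blockRow]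
  refine sum_congr rfl fun a _ => sum_congr rfl fun b _ => ?_
  simp only [of_apply, ite_smul, zero_smul, transpose_mul, transpose_pow, transpose_transpose,
    Matrix.mul_assoc]
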